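/- arXiv:2412.18471 — 2 statements merged into one kernel-verified Lean document; each statement's English description precedes it below -/
import Mathlib

section
/- Fix an integer n ≥ 3. The coefficients α_{j,i} satisfy the closed form α_{n−2,i} = (−1)^i (i+1)(i+2)/2 for all i = 0, …, n−3. -/
open Matrix

/-- The coefficients `α_{j,i}` (`j` is 1-based) for fixed order `n`, defined by the
recursion `α_{j,0} = 1`, `α_{n,i} = (-1)^i`, `α_{j,i} = α_{j+1,i} - α_{j,i-1}`. -/
def alphaCoef (n : ℕ) (j i : ℕ) : ℤ :=
  if n ≤ j then (-1) ^ i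
  else if i = 0 then 1
  else alphaCoef n (j + 1) i - alphaCoef n j (i - 1)
termination_by (n - j, i)
decreasing_by
  · apply Prod.Lex.left; omega
  · apply Prod.Lex.right' <;> omega

/-- The modulating-function-based transformation matrix `T_n(μ(t))`, whose (1-based)
`(j,k)` entry is `α_{j,j-k} μ^{(j-k)}(t)` for `k ≤ j` and `0` otherwise. -/
noncomputable def Tmat (n : ℕ) (μ : ℝ → ℝ) (t : ℝ) : Matrix (Fin n) (Fin n) ℝ :=
  Matrix.of fun j k : Fin n =>
    if (k : ℕ) ≤ (j : ℕ) then
      (alphaCoef n ((j : ℕ) + 1) ((j : ℕ) - (k : ℕ)) : ℝ) * iteratedDeriv ((j : ℕ) - (k : ℕ)) μ t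
    else 0

/-- `T_n(μ^{(1)}(t))`: the matrix obtained from `T_n` by shifting all derivative
orders up by one; its (1-based) `(j,k)` entry is `α_{j,j-k} μ^{(j-k+1)}(t)` for `k ≤ j`. -/
noncomputable def TmatShift (n : ℕ) (μ : ℝ → ℝ) (t : ℝ) : Matrix (Fin n) (Fin n) ℝ :=
  Matrix.of fun j k : Fin n =>
    if (k : ℕ) ≤ (j : ℕ) then
      (alphaCoef n ((j : ℕ) + 1) ((j : ℕ) - (k : ℕ)) : ℝ) * iteratedDeriv ((j : ℕ) - (k : ℕ) + 1) μ t
    else 0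

/-- The Brunovsky (nilpotent shift) matrix `A`: ones on the superdiagonal, zeros elsewhere. -/
def Amat (n : ℕ) : Matrix (Fin n) (Fin n) ℝ :=
  Matrix.of fun j k : Fin n => if (k : ℕ) = (j : ℕ) + 1 then 1 else 0

/-- First standard basis vector `e₁` of `ℝⁿ`. -/
def e1vec (n : ℕ) : Fin n → ℝ := fun k => if (k : ℕ) = 0 then 1 else 0

/-- Last standard basis vector `B₀ = (0,…,0,1)ᵀ` of `ℝⁿ`. -/
def B0vec (n : ℕ) : Fin n → ℝ := fun k => if (k : ℕ) = n - 1 then 1 else 0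

/-- The vector `B_α(t)` whose (1-based) `j`-th entry is `(-1)^(j-1) C(n,j) μ^{(j)}(t)`. -/
noncomputable def Balpha (n : ℕ) (μ : ℝ → ℝ) (t : ℝ) : Fin n → ℝ :=
  fun j => (-1 : ℝ) ^ (j : ℕ) * (n.choose ((j : ℕ) + 1)) * iteratedDeriv ((j : ℕ) + 1) μ t

theorem alphaCoef_of_le {n j : ℕ} (h : n ≤ j) (i : ℕ) : alphaCoef n j i = (-1) ^ i := by
  rw [alphaCoef, if_pos h]

theorem alphaCoef_zero_of_lt {n j : ℕ} (h : j < n) : alphaCoef n j 0 = 1 := by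
  rw [alphaCoef, if_neg h.not_ge, if_pos rfl]

theorem alphaCoef_succ_of_lt {n j : ℕ} (h : j < n) (i : ℕ) :
    alphaCoef n j (i + 1) = alphaCoef n (j + 1) (i + 1) - alphaCoef n j i := by
  rw [alphaCoef, if_neg h.not_ge, if_neg i.succ_ne_zero, Nat.add_sub_cancel]

/-- The recursion is Pascal's rule up to the sign `(-1)^i`. -/
theorem alphaCoef_sub_eq_choose {n k : ℕ} (hk : k ≤ n) (i : ℕ) :
    alphaCoef n (n - k) i = (-1) ^ i * ((i + k).choose k : ℤ) := by
  induction k generalizing i with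
  | zero => simp [alphaCoef_of_le le_rfl]
  | succ k ihk =>
    have hlt : n - (k + 1) < n := by omega
    have hnext : n - (k + 1) + 1 = n - k := by omega
    induction i with
    | zero => simp [alphaCoef_zero_of_lt hlt]
    | succ i ihi =>
      rw [alphaCoef_succ_of_lt hlt, hnext, ihk (by omega), ihi,
        show i + 1 + (k + 1) = i + 1 + k + 1 by omega, Nat.choose_succ_succ',
        show i + 1 + k = i + (k + 1) by omega]
      push_cast
      ring

/-- for `n ≥ 3`, `α_{n-2,i} = (-1)^i (i+1)(i+2)/2` for all `i = 0, …, n-3`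
(the division is exact since `(i+1)(i+2)` is even). -/
theorem alphaCoef_pred_pred (n : ℕ) (hn : 3 ≤ n) :
    ∀ i ≤ n - 3, alphaCoef n (n - 2) i = (-1) ^ i * (((i + 1) * (i + 2) / 2 : ℕ) : ℤ) := by
  intro i _
  rw [alphaCoef_sub_eq_choose (by omega : 2 ≤ n), Nat.choose_two_right,
    show i + 2 - 1 = i + 1 by omega, mul_comm (i + 2)]
end

section
/- Fix an integer n ≥ 1, t₀ ∈ ℝ, and let μ(t) = (1 − e^{−(t−t₀)})ⁿ. For every t_a > t₀, the quantity τ_{t_a} := sup_{t ≥ t_a} ‖T_n(μ(t))^{−1}‖ is finite, where ‖·‖ is the operator norm induced by the Euclidean norm on ℝⁿ. -/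
open Matrix

/-!
`T_n(μ(t))` is lower triangular with diagonal `μ(t)` and entries built from `μ` and its
derivatives. For `μ(t) = (1 - e^{-(t-t₀)})ⁿ` every derivative is a polynomial in `e^{-(t-t₀)}`
without constant term, so `T_n(μ(t))` depends continuously on `t` and tends to the identity as
`t → ∞`. On `[t_a, ∞)` its determinant `μ(t)ⁿ` does not vanish, hence `t ↦ T_n(μ(t))⁻¹` is
continuous there and tends to the identity; a continuous function on a closed half-line with a
finite limit at infinity is bounded.
-/

open Filter Topology Polynomial Set

theorem ContinuousOn.bddAbove_image_Ici_of_tendsto {α β : Type*}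
    [ConditionallyCompleteLinearOrder α] [TopologicalSpace α] [OrderTopology α]
    [LinearOrder β] [TopologicalSpace β] [OrderClosedTopology β]
    {f : α → β} {a : α} {L : β} (hf : ContinuousOn f (Ici a)) (hlim : Tendsto f atTop (𝓝 L)) :
    BddAbove (f '' Ici a) := by
  have : Nonempty β := ⟨L⟩
  obtain ⟨b, hb⟩ := hlim.isBoundedUnder_le
  obtain ⟨T, hT⟩ := eventually_atTop.1 hb
  have hhead : BddAbove (f '' Icc a T) :=
    isCompact_Icc.bddAbove_image (hf.mono Icc_subset_Ici_self)
  have htail : BddAbove (f '' Ici T) := ⟨b, forall_mem_image.2 hT⟩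
  exact (hhead.union htail).mono (image_mono Ici_subset_Icc_union_Ici |>.trans (image_union ..).le)

section ExpNeg

variable (t₀ : ℝ)

theorem hasDerivAt_eval_exp_neg (q : ℝ[X]) (t : ℝ) :
    HasDerivAt (fun s => q.eval (Real.exp (-(s - t₀))))
      ((-(X * derivative q)).eval (Real.exp (-(t - t₀)))) t := by
  have hexp : HasDerivAt (fun s => Real.exp (-(s - t₀))) (Real.exp (-(t - t₀)) * -1) t :=
    ((hasDerivAt_id t).sub_const t₀).neg.exp
  refine ((q.hasDerivAt _).comp t hexp).congr_deriv ?_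
  simp only [eval_neg, eval_mul, eval_X]
  ring

theorem iteratedDeriv_eval_exp_neg (q : ℝ[X]) (k : ℕ) :
    iteratedDeriv k (fun s => q.eval (Real.exp (-(s - t₀)))) =
      fun s => ((fun p : ℝ[X] => -(X * derivative p))^[k] q).eval (Real.exp (-(s - t₀))) := by
  induction k with
  | zero => rfl
  | succ k ih =>
    rw [iteratedDeriv_succ, ih, Function.iterate_succ_apply']
    exact funext fun t => (hasDerivAt_eval_exp_neg t₀ _ t).deriv

theorem continuous_iteratedDeriv_eval_exp_neg (q : ℝ[X]) (k : ℕ) :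
    Continuous (iteratedDeriv k (fun s => q.eval (Real.exp (-(s - t₀))))) := by
  rw [iteratedDeriv_eval_exp_neg]
  fun_prop

theorem tendsto_iteratedDeriv_eval_exp_neg (q : ℝ[X]) (k : ℕ) :
    Tendsto (iteratedDeriv k (fun s => q.eval (Real.exp (-(s - t₀))))) atTop
      (𝓝 (if k = 0 then q.eval 0 else 0)) := by
  have hexp : Tendsto (fun s => Real.exp (-(s - t₀))) atTop (𝓝 0) :=
    Real.tendsto_exp_atBot.comp <| tendsto_neg_atTop_atBot.comp <|
      tendsto_atTop_add_const_right _ _ tendsto_id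
  have hconst : ((fun p : ℝ[X] => -(X * derivative p))^[k] q).eval 0 =
      if k = 0 then q.eval 0 else 0 := by
    cases k <;> simp [Function.iterate_succ_apply']
  rw [iteratedDeriv_eval_exp_neg, ← hconst]
  exact ((Polynomial.continuous _).tendsto 0).comp hexp

end ExpNeg

theorem Matrix.continuousAt_inv_of_det_ne_zero {ι K : Type*} [Fintype ι] [DecidableEq ι]
    [Field K] [TopologicalSpace K] [IsTopologicalDivisionRing K]
    {A : Matrix ι ι K} (hA : A.det ≠ 0) : ContinuousAt Inv.inv A :=
  continuousAt_matrix_inv A <| by simpa [Ring.inverse_eq_inv'] using continuousAt_inv₀ hA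

section Tmat

variable {n : ℕ} {μ : ℝ → ℝ}

theorem alphaCoef_zero (n j : ℕ) : alphaCoef n j 0 = 1 := by
  rw [alphaCoef]
  split <;> simp

theorem Tmat_isLowerTriangular (n : ℕ) (μ : ℝ → ℝ) (t : ℝ) : (Tmat n μ t).IsLowerTriangular :=
  fun _ _ hjk => if_neg (not_le.2 hjk)

theorem Tmat_det (n : ℕ) (μ : ℝ → ℝ) (t : ℝ) : (Tmat n μ t).det = μ t ^ n := by
  rw [Matrix.det_of_isLowerTriangular _ (Tmat_isLowerTriangular n μ t)]
  simp [Tmat, alphaCoef_zero]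

theorem continuous_Tmat (hμ : ∀ k, Continuous (iteratedDeriv k μ)) : Continuous (Tmat n μ) :=
  continuous_matrix fun j k => by
    simp only [Tmat, Matrix.of_apply]
    split_ifs
    · exact continuous_const.mul (hμ _)
    · exact continuous_const

theorem tendsto_Tmat_one {l : Filter ℝ}
    (hμ : ∀ k, Tendsto (iteratedDeriv k μ) l (𝓝 (if k = 0 then 1 else 0))) :
    Tendsto (Tmat n μ) l (𝓝 1) := by
  refine tendsto_pi_nhds.2 fun j => tendsto_pi_nhds.2 fun k => ?_
  have hentry : Tendsto (fun t => Tmat n μ t j k) l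
      (𝓝 (if (k : ℕ) ≤ j then (alphaCoef n (j + 1) (j - k) : ℝ) *
        (if (j : ℕ) - k = 0 then 1 else 0) else 0)) := by
    by_cases hkj : (k : ℕ) ≤ j
    · simpa only [Tmat, Matrix.of_apply, hkj, if_true] using (hμ _).const_mul _
    · simpa only [Tmat, Matrix.of_apply, hkj, if_false] using tendsto_const_nhds
  convert hentry using 2
  simp only [Matrix.one_apply, Fin.ext_iff]
  split_ifs <;> simp_all [alphaCoef_zero]; omega

theorem bddAbove_opNorm_Tmat_inv {a : ℝ} (hcont : ∀ k, Continuous (iteratedDeriv k μ))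
    (hlim : ∀ k, Tendsto (iteratedDeriv k μ) atTop (𝓝 (if k = 0 then 1 else 0)))
    (hμ : ∀ t ∈ Ici a, μ t ≠ 0) :
    BddAbove ((fun t => ‖Matrix.toEuclideanCLM (𝕜 := ℝ) (Tmat n μ t)⁻¹‖) '' Ici a) := by
  have hnorm : Continuous fun A : Matrix (Fin n) (Fin n) ℝ => ‖Matrix.toEuclideanCLM (𝕜 := ℝ) A‖ :=
    (Matrix.toEuclideanCLM (n := Fin n) (𝕜 := ℝ)).toAlgEquiv.toLinearMap
      |>.continuous_of_finiteDimensional.norm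
  have hcontOn : ContinuousOn (fun t => (Tmat n μ t)⁻¹) (Ici a) := fun t ht =>
    have hdet : (Tmat n μ t).det ≠ 0 := by simpa [Tmat_det] using pow_ne_zero n (hμ t ht)
    ((Matrix.continuousAt_inv_of_det_ne_zero hdet).comp
      (continuous_Tmat hcont).continuousAt).continuousWithinAt
  have htendsto : Tendsto (fun t => (Tmat n μ t)⁻¹) atTop (𝓝 1) := by
    simpa [Function.comp_def] using
      (Matrix.continuousAt_inv_of_det_ne_zero (by simp)).tendsto.comp (tendsto_Tmat_one hlim)
  exact (hnorm.comp_continuousOn hcontOn).bddAbove_image_Ici_of_tendsto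
    ((hnorm.tendsto 1).comp htendsto)

end Tmat

theorem Tmat_inv_opNorm_bounded_general (n : ℕ) (t₀ : ℝ) (μ : ℝ → ℝ)
    (hμdef : ∀ t, μ t = (1 - Real.exp (-(t - t₀))) ^ n) :
    ∀ ta > t₀,
      BddAbove ((fun t => ‖Matrix.toEuclideanCLM (𝕜 := ℝ) ((Tmat n μ t)⁻¹)‖) ''
        Set.Ici ta) := by
  intro ta hta
  obtain rfl : μ = fun s => ((1 - X) ^ n : ℝ[X]).eval (Real.exp (-(s - t₀))) :=
    funext fun t => by simp [hμdef]
  refine bddAbove_opNorm_Tmat_inv (continuous_iteratedDeriv_eval_exp_neg t₀ ((1 - X) ^ n))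
    (fun k => by convert tendsto_iteratedDeriv_eval_exp_neg t₀ ((1 - X) ^ n) k using 3; simp)
    fun t ht => ?_
  have hexp_lt : Real.exp (-(t - t₀)) < 1 := Real.exp_lt_one_iff.2 (by linarith [mem_Ici.1 ht])
  simp only [eval_pow, eval_sub, eval_one, eval_X]
  exact pow_ne_zero n (sub_ne_zero.2 hexp_lt.ne')

/-- for `μ(t) = (1 - e^{-(t-t₀)})ⁿ` and every `t_a > t₀`, the quantity
`τ_{t_a} = sup_{t ≥ t_a} ‖T_n(μ(t))⁻¹‖` (operator norm induced by the Euclidean norm)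
is finite, i.e. the function `t ↦ ‖T_n(μ(t))⁻¹‖` is bounded above on `[t_a,∞)`. -/
theorem Tmat_inv_opNorm_bounded (n : ℕ) (hn : 1 ≤ n) (t₀ : ℝ) (μ : ℝ → ℝ)
    (hμdef : ∀ t, μ t = (1 - Real.exp (-(t - t₀))) ^ n) :
    ∀ ta > t₀,
      BddAbove ((fun t => ‖Matrix.toEuclideanCLM (𝕜 := ℝ) ((Tmat n μ t)⁻¹)‖) ''
        Set.Ici ta) :=
  Tmat_inv_opNorm_bounded_general n t₀ μ hμdef
end
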